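/- arXiv:2208.03838 — 8 statements merged into one kernel-verified Lean document; each statement's English description precedes it below -/
import Mathlib

section
/- Let a,b,c,a',b',c' > 0 with ab − c > 0, a'b' − c' > 0, and A, B > 0. Define τ : ℝ² → ℝ² by τ(R,S) = ((Rc − a'b)S + a'b' − c', R(S(ab−c) − ab') + c'). Then the fiber τ⁻¹(A,B) has exactly two elements. -/
/-- The fiber of `τ(R,S) = ((Rc − a'b)S + a'b' − c', R(S(ab−c) − ab') + c')`
over any `(A,B) ∈ ℝ_{>0}²` has exactly two elements. -/
theorem stmt6 (a b c a' b' c' A B : ℝ)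
    (ha : 0 < a) (hb : 0 < b) (hc : 0 < c) (habc : 0 < a * b - c)
    (ha' : 0 < a') (hb' : 0 < b') (hc' : 0 < c') (habc' : 0 < a' * b' - c')
    (hA : 0 < A) (hB : 0 < B) :
    {p : ℝ × ℝ |
      ((p.1 * c - a' * b) * p.2 + a' * b' - c',
        p.1 * (p.2 * (a * b - c) - a * b') + c') = (A, B)}.ncard = 2 := by
  have hab' : (0:ℝ) < a * b' := mul_pos ha hb'
  have ha'b : (0:ℝ) < a' * b := mul_pos ha' hb
  set α : ℝ := A - a' * b' + c' with hαd
  set β : ℝ := B - c' with hβd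
  set L : ℝ := c * (a * b - c) with hLd
  have hL : 0 < L := mul_pos hc habc
  set M : ℝ := c * β + (a * b - c) * α + a * a' * b * b' with hMd
  set D : ℝ := M ^ 2 - 4 * L * (α * β) with hDd
  have hD : 0 < D := by
    have hid : D = (c*B - (a*b-c)*A)^2 + (c'*(a*b-c) - c*(a'*b'-c'))^2
        + 2*(c*B + (a*b-c)*A)*(c'*(a*b-c) + c*(a'*b'-c'))
        + 4*(c*B)*((a*b-c)*(a'*b'-c')) + 4*(c*c')*((a*b-c)*A) := by
      rw [hDd, hMd, hLd, hαd, hβd]; ring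
    rw [hid]
    have h1 : 0 < 2*(c*B + (a*b-c)*A)*(c'*(a*b-c) + c*(a'*b'-c')) := by positivity
    have h2 : 0 < 4*(c*B)*((a*b-c)*(a'*b'-c')) := by positivity
    have h3 : 0 < 4*(c*c')*((a*b-c)*A) := by positivity
    nlinarith [sq_nonneg (c*B - (a*b-c)*A), sq_nonneg (c'*(a*b-c) - c*(a'*b'-c'))]
  set e : ℝ := Real.sqrt D with hed
  have he : 0 < e := by rw [hed]; exact Real.sqrt_pos.mpr hD
  have he2 : e ^ 2 = D := by rw [hed]; exact Real.sq_sqrt hD.le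
  set u1 : ℝ := (M + e) / (2 * L) with hu1d
  set u2 : ℝ := (M - e) / (2 * L) with hu2d
  have h2L : (2:ℝ) * L ≠ 0 := by positivity
  have hu1 : 2 * L * u1 = M + e := by rw [hu1d]; field_simp
  have hu2 : 2 * L * u2 = M - e := by rw [hu2d]; field_simp
  -- the two roots satisfy the quadratic
  have hq1 : L * u1 ^ 2 - M * u1 + α * β = 0 := by
    have h4 : (4:ℝ) * L ≠ 0 := by positivity
    have h' : 4 * L * (L * u1 ^ 2 - M * u1 + α * β) = 0 := by
      have hDexp : e ^ 2 = M ^ 2 - 4 * L * (α * β) := by rw [he2, hDd]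
      linear_combination (2 * L * u1 - M + e) * (by linarith [hu1] : 2 * L * u1 - M - e = 0) + hDexp
    exact (mul_eq_zero.mp h').resolve_left h4
  have hq2 : L * u2 ^ 2 - M * u2 + α * β = 0 := by
    have h4 : (4:ℝ) * L ≠ 0 := by positivity
    have h' : 4 * L * (L * u2 ^ 2 - M * u2 + α * β) = 0 := by
      have hDexp : e ^ 2 = M ^ 2 - 4 * L * (α * β) := by rw [he2, hDd]
      linear_combination (2 * L * u2 - M - e) * (by linarith [hu2] : 2 * L * u2 - M + e = 0) + hDexp
    exact (mul_eq_zero.mp h').resolve_left h4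
  set p1 : ℝ × ℝ := (((a*b-c)*u1 - β)/(a*b'), (c*u1 - α)/(a'*b)) with hp1d
  set p2 : ℝ × ℝ := (((a*b-c)*u2 - β)/(a*b'), (c*u2 - α)/(a'*b)) with hp2d
  have hne : p1 ≠ p2 := by
    intro h
    have h1 := congrArg Prod.fst h
    rw [hp1d, hp2d] at h1
    simp only at h1
    rw [div_eq_div_iff hab'.ne' hab'.ne'] at h1
    have hu : u1 = u2 := by
      have := mul_right_cancel₀ hab'.ne' h1
      have h2 := mul_left_cancel₀ habc.ne' (by linarith : (a*b-c)*u1 = (a*b-c)*u2)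
      exact h2
    rw [hu1d, hu2d, div_eq_div_iff h2L h2L] at hu
    have : e = 0 := by
      have := mul_right_cancel₀ h2L hu
      linarith
    linarith
  have hset : {p : ℝ × ℝ |
      ((p.1 * c - a' * b) * p.2 + a' * b' - c',
        p.1 * (p.2 * (a * b - c) - a * b') + c') = (A, B)} = {p1, p2} := by
    ext p
    simp only [Set.mem_setOf_eq, Set.mem_insert_iff, Set.mem_singleton_iff, Prod.mk.injEq]
    constructor
    · rintro ⟨h1, h2⟩
      -- derive linear relations
      have hg1 : a' * b * p.2 = c * (p.1 * p.2) - α := by rw [hαd]; linear_combination -h1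
      have hg2 : a * b' * p.1 = (a*b-c) * (p.1 * p.2) - β := by rw [hβd]; linear_combination -h2
      -- quadratic for u := p.1 * p.2
      have hq : L * (p.1*p.2) ^ 2 - M * (p.1*p.2) + α * β = 0 := by
        rw [hLd, hMd]
        linear_combination (β - (a*b-c) * (p.1*p.2)) * hg1 + (-(a'*b*p.2)) * hg2
      have hfac : (2*L*(p.1*p.2) - M - e) * (2*L*(p.1*p.2) - M + e) = 0 := by
        have hDexp : e ^ 2 = M ^ 2 - 4 * L * (α * β) := by rw [he2, hDd]
        linear_combination 4 * L * hq - hDexp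
      rcases mul_eq_zero.mp hfac with h0 | h0
      · left
        have hu : p.1 * p.2 = u1 := by
          rw [hu1d, eq_div_iff h2L]; linarith
        have hfst : p.1 = ((a*b-c)*u1 - β)/(a*b') := by
          rw [eq_div_iff hab'.ne']; linear_combination hg2 + (a*b-c)*hu
        have hsnd : p.2 = (c*u1 - α)/(a'*b) := by
          rw [eq_div_iff ha'b.ne']; linear_combination hg1 + c*hu
        rw [hp1d]
        exact Prod.ext hfst hsnd
      · right
        have hu : p.1 * p.2 = u2 := by
          rw [hu2d, eq_div_iff h2L]; linarith
        have hfst : p.1 = ((a*b-c)*u2 - β)/(a*b') := by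
          rw [eq_div_iff hab'.ne']; linear_combination hg2 + (a*b-c)*hu
        have hsnd : p.2 = (c*u2 - α)/(a'*b) := by
          rw [eq_div_iff ha'b.ne']; linear_combination hg1 + c*hu
        rw [hp2d]
        exact Prod.ext hfst hsnd
    · rintro (rfl | rfl)
      · rw [hp1d]
        simp only
        constructor
        · rw [hαd, hβd, hLd, hMd] at hq1
          field_simp
          linear_combination c * hq1
        · rw [hαd, hβd, hLd, hMd] at hq1
          field_simp
          linear_combination (a*b-c) * hq1
      · rw [hp2d]
        simp only
        constructor
        · rw [hαd, hβd, hLd, hMd] at hq2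
          field_simp
          linear_combination c * hq2
        · rw [hαd, hβd, hLd, hMd] at hq2
          field_simp
          linear_combination (a*b-c) * hq2
  rw [hset]
  exact Set.ncard_pair hne
end

section
/- Let a,b,c,a',b',c' > 0 with ab − c > 0 and a'b' − c' > 0. Define T = {(R,S) ∈ ℝ² : Ra − a' > 0, Sb − b' > 0, (Rc − a'b)S + a'b' − c' > 0, R(S(ab−c) − ab') + c' > 0} and τ : ℝ² → ℝ² by τ(R,S) = ((Rc − a'b)S + a'b' − c', R(S(ab−c) − ab') + c'). Then τ restricts to a bijection from T onto ℝ_{>0}². -/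
/-- Key polynomial identity: the quadratic `Q` vanishes at `Y = S*b - b'` when
`u,v` are the components of `τ(R,S)`. -/
private lemma tau_quad (a b c a' b' c' R S : ℝ) :
    a' * (a * b - c) * (S * b - b') ^ 2
      + ((a * b - c) * ((R * c - a' * b) * S + a' * b' - c')
          - c * (R * (S * (a * b - c) - a * b') + c')
          + a * b * c' - a' * b' * c) * (S * b - b')
      - b' * c * (((R * c - a' * b) * S + a' * b' - c')
          + (R * (S * (a * b - c) - a * b') + c')) = 0 := by
  ring

private lemma tau_sum (a b c a' b' c' R S : ℝ) :
    ((R * c - a' * b) * S + a' * b' - c') + (R * (S * (a * b - c) - a * b') + c')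
      = (R * a - a') * (S * b - b') := by
  ring

/-- A quadratic with positive leading coefficient and negative constant term
has a positive root. -/
private lemma quad_pos_root (A B C : ℝ) (hA : 0 < A) (hC : 0 < C) :
    ∃ Y : ℝ, 0 < Y ∧ A * Y ^ 2 + B * Y - C = 0 := by
  have hD0 : (0:ℝ) ≤ B ^ 2 + 4 * A * C := by positivity
  obtain ⟨s, hs⟩ : ∃ s : ℝ, s = Real.sqrt (B ^ 2 + 4 * A * C) := ⟨_, rfl⟩
  have hs2 : s ^ 2 = B ^ 2 + 4 * A * C := by rw [hs]; exact Real.sq_sqrt hD0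
  have habs : |B| < s := by
    rw [hs, ← Real.sqrt_sq_eq_abs]
    exact Real.sqrt_lt_sqrt (sq_nonneg B) (by nlinarith)
  have hnum : 0 < -B + s := by
    have := le_abs_self B
    linarith
  refine ⟨(-B + s) / (2 * A), div_pos hnum (by linarith), ?_⟩
  have h2A : (2 * A) ≠ 0 := by positivity
  field_simp
  nlinarith [hs2]

/-- `τ` restricts to a bijection from the totally positive region `T` onto
`ℝ_{>0}²`. -/
theorem stmt7 (a b c a' b' c' : ℝ)
    (ha : 0 < a) (hb : 0 < b) (hc : 0 < c) (habc : 0 < a * b - c)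
    (ha' : 0 < a') (hb' : 0 < b') (hc' : 0 < c') (habc' : 0 < a' * b' - c') :
    Set.BijOn
      (fun p : ℝ × ℝ =>
        ((p.1 * c - a' * b) * p.2 + a' * b' - c',
          p.1 * (p.2 * (a * b - c) - a * b') + c'))
      {p : ℝ × ℝ | p.1 * a - a' > 0 ∧ p.2 * b - b' > 0 ∧
        (p.1 * c - a' * b) * p.2 + a' * b' - c' > 0 ∧
        p.1 * (p.2 * (a * b - c) - a * b') + c' > 0}
      {q : ℝ × ℝ | 0 < q.1 ∧ 0 < q.2} := by
  refine ⟨?_, ?_, ?_⟩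
  · -- MapsTo
    rintro ⟨R, S⟩ ⟨_, _, h3, h4⟩
    exact ⟨h3, h4⟩
  · -- InjOn
    rintro ⟨R₁, S₁⟩ ⟨hX1, hY1, hu1, hv1⟩ ⟨R₂, S₂⟩ ⟨hX2, hY2, hu2, hv2⟩ heq
    simp only [Prod.mk.injEq] at heq
    obtain ⟨h1, h2⟩ := heq
    simp only at hX1 hY1 hu1 hv1 hX2 hY2 hu2 hv2
    have hQ1 := tau_quad a b c a' b' c' R₁ S₁
    have hQ2 := tau_quad a b c a' b' c' R₂ S₂
    rw [← h1, ← h2] at hQ2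
    have huv : 0 < ((R₁ * c - a' * b) * S₁ + a' * b' - c')
        + (R₁ * (S₁ * (a * b - c) - a * b') + c') := by linarith
    have hfac : ((S₁ * b - b') - (S₂ * b - b'))
        * (a' * (a * b - c) * ((S₁ * b - b') + (S₂ * b - b'))
          + ((a * b - c) * ((R₁ * c - a' * b) * S₁ + a' * b' - c')
              - c * (R₁ * (S₁ * (a * b - c) - a * b') + c')
              + a * b * c' - a' * b' * c)) = 0 := by
      linear_combination hQ1 - hQ2
    have hS : S₁ = S₂ := by
      rcases mul_eq_zero.mp hfac with h | h
      · have : S₁ * b = S₂ * b := by linarith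
        exact mul_right_cancel₀ hb.ne' this
      · exfalso
        have key : a' * (a * b - c) * ((S₁ * b - b') * (S₂ * b - b'))
            + b' * c * (((R₁ * c - a' * b) * S₁ + a' * b' - c')
              + (R₁ * (S₁ * (a * b - c) - a * b') + c')) = 0 := by
          linear_combination (S₁ * b - b') * h - hQ1
        have p1 : 0 < a' * (a * b - c) * ((S₁ * b - b') * (S₂ * b - b')) :=
          mul_pos (mul_pos ha' habc) (mul_pos hY1 hY2)
        have p2 : 0 < b' * c * (((R₁ * c - a' * b) * S₁ + a' * b' - c')
            + (R₁ * (S₁ * (a * b - c) - a * b') + c')) :=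
          mul_pos (mul_pos hb' hc) huv
        linarith
    subst hS
    have hsum1 := tau_sum a b c a' b' c' R₁ S₁
    have hsum2 := tau_sum a b c a' b' c' R₂ S₁
    have hprod : (R₁ - R₂) * (a * (S₁ * b - b')) = 0 := by
      linear_combination h1 + h2 - hsum1 + hsum2
    have hR : R₁ = R₂ := by
      rcases mul_eq_zero.mp hprod with h | h
      · linarith
      · exfalso
        have : 0 < a * (S₁ * b - b') := mul_pos ha hY1
        linarith
    rw [hR]
  · -- SurjOn
    rintro ⟨u, v⟩ ⟨hu, hv⟩
    simp only at hu hv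
    have huv : 0 < u + v := by linarith
    obtain ⟨Y, hYpos, hQ⟩ := quad_pos_root (a' * (a * b - c))
      ((a * b - c) * u - c * v + a * b * c' - a' * b' * c) (b' * c * (u + v))
      (mul_pos ha' habc) (mul_pos (mul_pos hb' hc) huv)
    obtain ⟨X, hXY⟩ : ∃ X : ℝ, X * Y = u + v :=
      ⟨(u + v) / Y, div_mul_cancel₀ _ hYpos.ne'⟩
    have hXpos : 0 < X := by
      by_contra h
      push_neg at h
      nlinarith [mul_nonneg (neg_nonneg.mpr h) hYpos.le]
    obtain ⟨R, hR⟩ : ∃ R : ℝ, R * a = X + a' :=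
      ⟨(X + a') / a, div_mul_cancel₀ _ ha.ne'⟩
    obtain ⟨S, hSd⟩ : ∃ S : ℝ, S * b = Y + b' :=
      ⟨(Y + b') / b, div_mul_cancel₀ _ hb.ne'⟩
    have hX : X = R * a - a' := by linarith
    have hY : Y = S * b - b' := by linarith
    subst hX hY
    -- now hQ is the quadratic in S*b - b', hXY : (R*a-a')*(S*b-b') = u+v
    have hveq : R * (S * (a * b - c) - a * b') + c' = v := by
      have h0 : (S * b - b') * (a * b) * ((R * (S * (a * b - c) - a * b') + c') - v) = 0 := by
        linear_combination hQ + ((S * b - b') * (a * b - c) - b' * c) * hXY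
      have hne : (S * b - b') * (a * b) ≠ 0 :=
        mul_ne_zero hYpos.ne' (by positivity)
      rcases mul_eq_zero.mp h0 with h | h
      · exact absurd h hne
      · linarith
    have hueq : (R * c - a' * b) * S + a' * b' - c' = u := by
      linear_combination hXY - hveq
    refine ⟨(R, S), ⟨?_, ?_, ?_, ?_⟩, ?_⟩
    · exact hXpos
    · exact hYpos
    · show 0 < (R * c - a' * b) * S + a' * b' - c'
      rw [hueq]; exact hu
    · show 0 < R * (S * (a * b - c) - a * b') + c'
      rw [hveq]; exact hv
    · simp only [Prod.mk.injEq]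
      exact ⟨hueq, hveq⟩
end

section
/- Let a,b,c,a',b',c' > 0 with ab − c > 0 and a'b' − c' > 0. With T and τ as before, the restriction of τ to T is a homeomorphism from T (with subspace topology of ℝ²) onto ℝ_{>0}²; its inverse sends (A,B) to (R,S) where S = b'/b + (−μ + √(μ² + 4(ab−c)a'b'c(A+B)))/(2(ab−c)a'b) with μ = abc' − a'b'c + (ab−c)A − cB, and R is determined by R = ((ab−c)a'b·S + (−aa'bb' + a'b'c + abc' + (ab−c)A − cB))/(ab'c). -/
/-!
In the coordinates `x = R a - a'`, `y = S b - b'`, the map `τ = (A, B)` satisfies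
`A + B = x y` and `μ = b' c x - (a b - c) a' y`, where `μ` is the affine form
`a b c' - a' b' c + (a b - c) A - c B`. Since `a b ≠ 0`, the pair `(A + B, μ)` determines
`(A, B)`, so inverting `τ` amounts to recovering positive `x, y` from `x y` and `α x - β y`
(`α = b' c`, `β = (a b - c) a'`). That is a quadratic whose discriminant
`μ² + 4 α β (A + B)` equals `(α x + β y)²`, which gives the stated closed form;
both `τ` and that formula are continuous on all of `ℝ²`.
-/

namespace Tau

variable (a b c a' b' c' : ℝ)

def map (p : ℝ × ℝ) : ℝ × ℝ :=
  ((p.1 * c - a' * b) * p.2 + a' * b' - c', p.1 * (p.2 * (a * b - c) - a * b') + c')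

def domain : Set (ℝ × ℝ) :=
  {p | p.1 * a - a' > 0 ∧ p.2 * b - b' > 0 ∧ (map a b c a' b' c' p).1 > 0 ∧
    (map a b c a' b' c' p).2 > 0}

def mu (q : ℝ × ℝ) : ℝ :=
  a * b * c' - a' * b' * c + (a * b - c) * q.1 - c * q.2

def disc (q : ℝ × ℝ) : ℝ :=
  mu a b c a' b' c' q ^ 2 + 4 * (a * b - c) * a' * b' * c * (q.1 + q.2)

noncomputable def invSnd (q : ℝ × ℝ) : ℝ :=
  b' / b + (-mu a b c a' b' c' q + √(disc a b c a' b' c' q)) / (2 * (a * b - c) * a' * b)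

noncomputable def invFst (q : ℝ × ℝ) (S : ℝ) : ℝ :=
  ((a * b - c) * a' * b * S
      + (-(a * a' * b * b') + a' * b' * c + a * b * c' + (a * b - c) * q.1 - c * q.2))
    / (a * b' * c)

noncomputable def inv (q : ℝ × ℝ) : ℝ × ℝ :=
  (invFst a b c a' b' c' q (invSnd a b c a' b' c' q), invSnd a b c a' b' c' q)

theorem continuous_map : Continuous (map a b c a' b' c') := by
  unfold map
  fun_prop

theorem continuous_inv : Continuous (inv a b c a' b' c') := by
  unfold inv invFst invSnd disc mu
  fun_prop

variable {a b c a' b' c'}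

theorem map_fst_add_snd (p : ℝ × ℝ) :
    (map a b c a' b' c' p).1 + (map a b c a' b' c' p).2 = (p.1 * a - a') * (p.2 * b - b') := by
  simp only [map]
  ring

theorem mu_map (p : ℝ × ℝ) :
    mu a b c a' b' c' (map a b c a' b' c' p)
      = b' * c * (p.1 * a - a') - (a * b - c) * a' * (p.2 * b - b') := by
  simp only [mu, map]
  ring

theorem disc_map (p : ℝ × ℝ) :
    disc a b c a' b' c' (map a b c a' b' c' p)
      = (b' * c * (p.1 * a - a') + (a * b - c) * a' * (p.2 * b - b')) ^ 2 := by
  rw [disc, mu_map, map_fst_add_snd]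
  ring

theorem eq_of_add_eq_of_mu_eq (hab : a * b ≠ 0) {q q' : ℝ × ℝ}
    (hadd : q.1 + q.2 = q'.1 + q'.2) (hmu : mu a b c a' b' c' q = mu a b c a' b' c' q') :
    q = q' := by
  simp only [mu] at hmu
  have hfst : a * b * (q.1 - q'.1) = 0 := by linear_combination hmu + c * hadd
  have hfst' : q.1 = q'.1 := by
    linarith [(mul_eq_zero.mp hfst).resolve_left hab]
  exact Prod.ext hfst' (by linarith)


theorem invFst_map (ha : a ≠ 0) (hb' : b' ≠ 0) (hc : c ≠ 0) (p : ℝ × ℝ) :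
    invFst a b c a' b' c' (map a b c a' b' c' p) p.2 = p.1 := by
  rw [invFst, div_eq_iff (by positivity)]
  simp only [map]
  ring

theorem invSnd_map (hb : b ≠ 0) (hD : 0 < a * b - c) (ha' : 0 < a') (hb' : 0 < b') (hc : 0 < c)
    {p : ℝ × ℝ} (hx : 0 ≤ p.1 * a - a') (hy : 0 ≤ p.2 * b - b') :
    invSnd a b c a' b' c' (map a b c a' b' c' p) = p.2 := by
  rw [invSnd, disc_map, Real.sqrt_sq (by positivity), mu_map,
    div_add_div _ _ hb (by positivity), div_eq_iff (by positivity)]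
  ring

theorem inv_map (ha : 0 < a) (hb : 0 < b) (hc : 0 < c) (hD : 0 < a * b - c) (ha' : 0 < a')
    (hb' : 0 < b') {p : ℝ × ℝ} (hx : 0 ≤ p.1 * a - a') (hy : 0 ≤ p.2 * b - b') :
    inv a b c a' b' c' (map a b c a' b' c' p) = p := by
  rw [inv, invSnd_map hb.ne' hD ha' hb' hc hx hy, invFst_map ha.ne' hb'.ne' hc.ne']

theorem inv_snd_mul_sub (hb : b ≠ 0) (q : ℝ × ℝ) :
    (inv a b c a' b' c' q).2 * b - b'
      = (√(disc a b c a' b' c' q) - mu a b c a' b' c' q) / (2 * ((a * b - c) * a')) := by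
  simp only [inv, invSnd]
  field_simp
  ring

theorem inv_fst_mul_sub (ha : a ≠ 0) (hb : b ≠ 0) (hc : c ≠ 0) (hD : a * b - c ≠ 0)
    (ha' : a' ≠ 0) (hb' : b' ≠ 0) (q : ℝ × ℝ) :
    (inv a b c a' b' c' q).1 * a - a'
      = (√(disc a b c a' b' c' q) + mu a b c a' b' c' q) / (2 * (b' * c)) := by
  simp only [inv, invFst, invSnd, mu]
  field_simp
  ring


theorem map_inv (ha : 0 < a) (hb : 0 < b) (hc : 0 < c) (hD : 0 < a * b - c) (ha' : 0 < a')
    (hb' : 0 < b') {q : ℝ × ℝ} (hq : 0 ≤ q.1 + q.2) :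
    map a b c a' b' c' (inv a b c a' b' c' q) = q := by
  have hx := inv_fst_mul_sub (c' := c') ha.ne' hb.ne' hc.ne' hD.ne' ha'.ne' hb'.ne' q
  have hy := inv_snd_mul_sub (a := a) (c := c) (a' := a') (b' := b') (c' := c') hb.ne' q
  set s := √(disc a b c a' b' c' q)
  have hs : s ^ 2 = disc a b c a' b' c' q := Real.sq_sqrt (by unfold disc; positivity)
  have hadd : (map a b c a' b' c' (inv a b c a' b' c' q)).1
      + (map a b c a' b' c' (inv a b c a' b' c' q)).2 = q.1 + q.2 := by
    rw [map_fst_add_snd, hx, hy]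
    rw [disc] at hs
    field_simp
    linear_combination hs
  have hmu : mu a b c a' b' c' (map a b c a' b' c' (inv a b c a' b' c' q))
      = mu a b c a' b' c' q := by
    rw [mu_map, hx, hy]
    field_simp
    ring
  exact eq_of_add_eq_of_mu_eq (mul_pos ha hb).ne' hadd hmu

theorem inv_mem_domain (ha : 0 < a) (hb : 0 < b) (hc : 0 < c) (hD : 0 < a * b - c)
    (ha' : 0 < a') (hb' : 0 < b') {q : ℝ × ℝ} (hA : 0 < q.1) (hB : 0 < q.2) :
    inv a b c a' b' c' q ∈ domain a b c a' b' c' := by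
  have hmu : mu a b c a' b' c' q ^ 2 < disc a b c a' b' c' q := by
    unfold disc
    have : 0 < 4 * (a * b - c) * a' * b' * c * (q.1 + q.2) := by positivity
    linarith
  rw [domain, Set.mem_ofPred_eq, map_inv ha hb hc hD ha' hb' (by positivity),
    inv_fst_mul_sub ha.ne' hb.ne' hc.ne' hD.ne' ha'.ne' hb'.ne', inv_snd_mul_sub hb.ne']
  refine ⟨div_pos ?_ (by positivity), div_pos ?_ (by positivity), hA, hB⟩
  · linarith [Real.neg_sqrt_lt_of_sq_lt hmu]
  · linarith [Real.lt_sqrt_of_sq_lt hmu]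


noncomputable def partialHomeomorph (ha : 0 < a) (hb : 0 < b) (hc : 0 < c)
    (hD : 0 < a * b - c) (ha' : 0 < a') (hb' : 0 < b') : PartialHomeomorph (ℝ × ℝ) (ℝ × ℝ) where
  toFun := map a b c a' b' c'
  invFun := inv a b c a' b' c'
  source := domain a b c a' b' c'
  target := {q | 0 < q.1 ∧ 0 < q.2}
  map_source' _ hp := ⟨hp.2.2.1, hp.2.2.2⟩
  map_target' _ hq := inv_mem_domain ha hb hc hD ha' hb' hq.1 hq.2
  left_inv' _ hp := inv_map ha hb hc hD ha' hb' hp.1.le hp.2.1.le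
  right_inv' _ hq := map_inv ha hb hc hD ha' hb' (add_pos hq.1 hq.2).le
  continuousOn_toFun := (continuous_map a b c a' b' c').continuousOn
  continuousOn_invFun := (continuous_inv a b c a' b' c').continuousOn

end Tau

theorem stmt8_general (a b c a' b' c' : ℝ)
    (ha : 0 < a) (hb : 0 < b) (hc : 0 < c) (habc : 0 < a * b - c)
    (ha' : 0 < a') (hb' : 0 < b') :
    ∃ h : {p : ℝ × ℝ // p.1 * a - a' > 0 ∧ p.2 * b - b' > 0 ∧
        (p.1 * c - a' * b) * p.2 + a' * b' - c' > 0 ∧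
        p.1 * (p.2 * (a * b - c) - a * b') + c' > 0} ≃ₜ
          {q : ℝ × ℝ // 0 < q.1 ∧ 0 < q.2},
      (∀ p, (h p : ℝ × ℝ)
          = (((p : ℝ × ℝ).1 * c - a' * b) * (p : ℝ × ℝ).2 + a' * b' - c',
             (p : ℝ × ℝ).1 * ((p : ℝ × ℝ).2 * (a * b - c) - a * b') + c')) ∧
      (∀ q : {q : ℝ × ℝ // 0 < q.1 ∧ 0 < q.2},
        ((h.symm q : ℝ × ℝ).2
            = b' / b +
              (-(a * b * c' - a' * b' * c + (a * b - c) * (q : ℝ × ℝ).1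
                  - c * (q : ℝ × ℝ).2)
                + Real.sqrt ((a * b * c' - a' * b' * c + (a * b - c) * (q : ℝ × ℝ).1
                    - c * (q : ℝ × ℝ).2) ^ 2
                  + 4 * (a * b - c) * a' * b' * c * ((q : ℝ × ℝ).1 + (q : ℝ × ℝ).2)))
                / (2 * (a * b - c) * a' * b)) ∧
          ((h.symm q : ℝ × ℝ).1
            = ((a * b - c) * a' * b * (h.symm q : ℝ × ℝ).2
                + (-(a * a' * b * b') + a' * b' * c + a * b * c'
                    + (a * b - c) * (q : ℝ × ℝ).1 - c * (q : ℝ × ℝ).2))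
                / (a * b' * c))) :=
  ⟨(Tau.partialHomeomorph ha hb hc habc ha' hb').toHomeomorphSourceTarget,
    fun _ => rfl, fun _ => ⟨rfl, rfl⟩⟩

/-- The restriction of `τ` to `T` is a homeomorphism onto `ℝ_{>0}²`, with the
explicitly described inverse. -/
theorem stmt8 (a b c a' b' c' : ℝ)
    (ha : 0 < a) (hb : 0 < b) (hc : 0 < c) (habc : 0 < a * b - c)
    (ha' : 0 < a') (hb' : 0 < b') (hc' : 0 < c') (habc' : 0 < a' * b' - c') :
    ∃ h : {p : ℝ × ℝ // p.1 * a - a' > 0 ∧ p.2 * b - b' > 0 ∧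
        (p.1 * c - a' * b) * p.2 + a' * b' - c' > 0 ∧
        p.1 * (p.2 * (a * b - c) - a * b') + c' > 0} ≃ₜ
          {q : ℝ × ℝ // 0 < q.1 ∧ 0 < q.2},
      (∀ p, (h p : ℝ × ℝ)
          = (((p : ℝ × ℝ).1 * c - a' * b) * (p : ℝ × ℝ).2 + a' * b' - c',
             (p : ℝ × ℝ).1 * ((p : ℝ × ℝ).2 * (a * b - c) - a * b') + c')) ∧
      (∀ q : {q : ℝ × ℝ // 0 < q.1 ∧ 0 < q.2},
        ((h.symm q : ℝ × ℝ).2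
            = b' / b +
              (-(a * b * c' - a' * b' * c + (a * b - c) * (q : ℝ × ℝ).1
                  - c * (q : ℝ × ℝ).2)
                + Real.sqrt ((a * b * c' - a' * b' * c + (a * b - c) * (q : ℝ × ℝ).1
                    - c * (q : ℝ × ℝ).2) ^ 2
                  + 4 * (a * b - c) * a' * b' * c * ((q : ℝ × ℝ).1 + (q : ℝ × ℝ).2)))
                / (2 * (a * b - c) * a' * b)) ∧
          ((h.symm q : ℝ × ℝ).1
            = ((a * b - c) * a' * b * (h.symm q : ℝ × ℝ).2
                + (-(a * a' * b * b') + a' * b' * c + a * b * c'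
                    + (a * b - c) * (q : ℝ × ℝ).1 - c * (q : ℝ × ℝ).2))
                / (a * b' * c))) :=
  stmt8_general a b c a' b' c' ha hb hc habc ha' hb'
end

section
/- Let a,b,c,a',b',c' > 0 with ab − c > 0, a'b' − c' > 0, and A, B > 0. Set S̃ = S − b'/b. If (R,S) satisfies RSc = a'bS − a'b' + c' + A and RS(ab−c) = ab'R − c' + B, then S̃ satisfies (ab−c)a'b·S̃² + (abc' − a'b'c + (ab−c)A − cB)·S̃ − (A+B)cb'/b = 0. -/
/-- Substituting `S̃ = S − b'/b` into the system for `(R,S)` yields the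
quadratic `(ab−c)a'b·S̃² + (abc' − a'b'c + (ab−c)A − cB)·S̃ − (A+B)cb'/b = 0`. -/
theorem stmt10 (a b c a' b' c' A B R S : ℝ)
    (ha : 0 < a) (hb : 0 < b) (hc : 0 < c) (habc : 0 < a * b - c)
    (ha' : 0 < a') (hb' : 0 < b') (hc' : 0 < c') (habc' : 0 < a' * b' - c')
    (hA : 0 < A) (hB : 0 < B)
    (h1 : R * S * c = a' * b * S - a' * b' + c' + A)
    (h2 : R * S * (a * b - c) = a * b' * R - c' + B) :
    (a * b - c) * a' * b * (S - b' / b) ^ 2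
      + (a * b * c' - a' * b' * c + (a * b - c) * A - c * B) * (S - b' / b)
      - (A + B) * c * b' / b = 0 := by
  have hbne : b ≠ 0 := ne_of_gt hb
  have key : (a * b - c) * a' * (b * S - b') ^ 2
      + (a * b * c' - a' * b' * c + (a * b - c) * A - c * B) * (b * S - b')
      - (A + B) * c * b' = 0 := by
    linear_combination (a * b' * b - S * b * (a * b - c)) * h1 + S * b * c * h2
  have heq : (a * b - c) * a' * b * (S - b' / b) ^ 2
      + (a * b * c' - a' * b' * c + (a * b - c) * A - c * B) * (S - b' / b)
      - (A + B) * c * b' / b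
      = ((a * b - c) * a' * (b * S - b') ^ 2
      + (a * b * c' - a' * b' * c + (a * b - c) * A - c * B) * (b * S - b')
      - (A + B) * c * b') / b := by
    field_simp
  rw [heq, key, zero_div]
end

section
/- Let a,b,c,a',b',c' > 0 with ab − c > 0 and a'b' − c' > 0. Then the set T = {(R,S) ∈ ℝ² : Ra − a' > 0, Sb − b' > 0, (Rc − a'b)S + a'b' − c' > 0, R(S(ab−c) − ab') + c' > 0} is nonempty and open in ℝ². -/
/-! As `R, S → ∞` every defining expression of `T` tends to `+∞`, its leading term being
`Ra`, `Sb`, `RSc` or `RS(ab − c)`; so `T` contains all `(R, S)` with `R, S` large enough. -/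

open Filter

lemma Filter.Tendsto.atTop_mul_const_sub {α : Type*} {l : Filter α} {f : α → ℝ} {r : ℝ}
    (hr : 0 < r) (s : ℝ) (hf : Tendsto f l atTop) :
    Tendsto (fun x => f x * r - s) l atTop := by
  simpa only [sub_eq_add_neg] using tendsto_atTop_add_const_right l (-s) (hf.atTop_mul_const hr)

lemma Filter.Tendsto.atTop_add_sub_const {α : Type*} {l : Filter α} {f : α → ℝ} (s t : ℝ)
    (hf : Tendsto f l atTop) : Tendsto (fun x => f x + s - t) l atTop := by
  simpa only [add_sub_assoc] using tendsto_atTop_add_const_right l (s - t) hf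

theorem stmt13_general (a b c a' b' c' : ℝ)
    (ha : 0 < a) (hb : 0 < b) (hc : 0 < c) (habc : 0 < a * b - c) :
    ({p : ℝ × ℝ | p.1 * a - a' > 0 ∧ p.2 * b - b' > 0 ∧
        (p.1 * c - a' * b) * p.2 + a' * b' - c' > 0 ∧
        p.1 * (p.2 * (a * b - c) - a * b') + c' > 0}).Nonempty ∧
      IsOpen {p : ℝ × ℝ | p.1 * a - a' > 0 ∧ p.2 * b - b' > 0 ∧
        (p.1 * c - a' * b) * p.2 + a' * b' - c' > 0 ∧
        p.1 * (p.2 * (a * b - c) - a * b') + c' > 0} := by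
  have hR : Tendsto (fun p : ℝ × ℝ => p.1) (atTop ×ˢ atTop) atTop := tendsto_fst
  have hS : Tendsto (fun p : ℝ × ℝ => p.2) (atTop ×ˢ atTop) atTop := tendsto_snd
  have h₁ := hR.atTop_mul_const_sub ha a'
  have h₂ := hS.atTop_mul_const_sub hb b'
  have h₃ := ((hR.atTop_mul_const_sub hc (a' * b)).atTop_mul_atTop₀ hS).atTop_add_sub_const
    (a' * b') c'
  have h₄ := tendsto_atTop_add_const_right _ c'
    (hR.atTop_mul_atTop₀ (hS.atTop_mul_const_sub habc (a * b')))
  refine ⟨((h₁.eventually_gt_atTop 0).and ((h₂.eventually_gt_atTop 0).and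
    ((h₃.eventually_gt_atTop 0).and (h₄.eventually_gt_atTop 0)))).exists, ?_⟩
  exact (isOpen_lt continuous_const (by fun_prop)).and ((isOpen_lt continuous_const
    (by fun_prop)).and ((isOpen_lt continuous_const (by fun_prop)).and
      (isOpen_lt continuous_const (by fun_prop))))

/-- The totally positive region
`T = {(R,S) : Ra−a' > 0, Sb−b' > 0, (Rc−a'b)S+a'b'−c' > 0, R(S(ab−c)−ab')+c' > 0}`
is nonempty and open in `ℝ²`. -/
theorem stmt13 (a b c a' b' c' : ℝ)
    (ha : 0 < a) (hb : 0 < b) (hc : 0 < c) (habc : 0 < a * b - c)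
    (ha' : 0 < a') (hb' : 0 < b') (hc' : 0 < c') (habc' : 0 < a' * b' - c') :
    ({p : ℝ × ℝ | p.1 * a - a' > 0 ∧ p.2 * b - b' > 0 ∧
        (p.1 * c - a' * b) * p.2 + a' * b' - c' > 0 ∧
        p.1 * (p.2 * (a * b - c) - a * b') + c' > 0}).Nonempty ∧
      IsOpen {p : ℝ × ℝ | p.1 * a - a' > 0 ∧ p.2 * b - b' > 0 ∧
        (p.1 * c - a' * b) * p.2 + a' * b' - c' > 0 ∧
        p.1 * (p.2 * (a * b - c) - a * b') + c' > 0} :=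
  stmt13_general a b c a' b' c' ha hb hc habc
end

section
/- Let a, a' > 0 and consider SL₂(ℝ). The set {t ∈ T_{>0} : t·y(a)·t⁻¹·y(a')⁻¹ is totally positive lower unitriangular} is homeomorphic to ℝ_{>0} via t = diag(r, r⁻¹) ↦ (r⁻²)·a − a'. -/
/-!
Conjugating by `t = diag(r, r⁻¹)` rescales `y(a)` to `y(r⁻² a)`, and `y` is additive, so
`t y(a) t⁻¹ y(a')⁻¹ = y(r⁻² a - a')`. The set in question is therefore `{r > 0 | r⁻² a > a'}`,
on which `r ↦ r⁻² a - a'` is a homeomorphism onto `ℝ_{>0}` with inverse `x ↦ √(a / (x + a'))`.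
-/

section LowerUnitriangular

variable {R : Type*} [CommRing R]

theorem lowerUnitriangular_mul (x y : R) :
    !![1, 0; x, 1] * !![1, 0; y, 1] = !![(1 : R), 0; x + y, 1] := by
  simp

theorem lowerUnitriangular_inv (x : R) : (!![1, 0; x, 1])⁻¹ = !![(1 : R), 0; -x, 1] :=
  Matrix.inv_eq_right_inv <| by simp [Matrix.one_fin_two]

theorem lowerUnitriangular_inj {x y : R} :
    !![1, 0; x, 1] = !![(1 : R), 0; y, 1] ↔ x = y := by
  simp

end LowerUnitriangular

section Torus

variable {K : Type*} [Field K]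

theorem diag_inv {r : K} (hr : r ≠ 0) : (!![r, 0; 0, r⁻¹])⁻¹ = !![r⁻¹, 0; 0, r] :=
  Matrix.inv_eq_right_inv <| by simp [Matrix.one_fin_two, hr]

theorem diag_mul_lowerUnitriangular_mul_diag_inv {r : K} (hr : r ≠ 0) (x : K) :
    !![r, 0; 0, r⁻¹] * !![1, 0; x, 1] * (!![r, 0; 0, r⁻¹])⁻¹ = !![1, 0; (r ^ 2)⁻¹ * x, 1] := by
  rw [diag_inv hr]
  simp [hr]
  ring

theorem diag_conj_lowerUnitriangular_mul_inv {r : K} (hr : r ≠ 0) (x x' : K) :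
    !![r, 0; 0, r⁻¹] * !![1, 0; x, 1] * (!![r, 0; 0, r⁻¹])⁻¹ * (!![1, 0; x', 1])⁻¹ =
      !![1, 0; (r ^ 2)⁻¹ * x - x', 1] := by
  rw [diag_mul_lowerUnitriangular_mul_diag_inv hr, lowerUnitriangular_inv,
    lowerUnitriangular_mul, sub_eq_add_neg]

end Torus

noncomputable def homeomorphInvSqMulSub {a a' : ℝ} (ha : 0 < a) (ha' : 0 ≤ a') :
    {r : ℝ // 0 < r ∧ 0 < (r ^ 2)⁻¹ * a - a'} ≃ₜ {x : ℝ // 0 < x} where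
  toFun r := ⟨((r : ℝ) ^ 2)⁻¹ * a - a', r.2.2⟩
  invFun x := ⟨√(a / (x + a')), by
    have hx : 0 < (x : ℝ) + a' := add_pos_of_pos_of_nonneg x.2 ha'
    refine ⟨by positivity, ?_⟩
    rw [Real.sq_sqrt (by positivity), inv_div, div_mul_cancel₀ _ ha.ne', add_sub_cancel_right]
    exact x.2⟩
  left_inv r := by
    obtain ⟨r, hr, -⟩ := r
    ext
    simp only [sub_add_cancel, ← div_eq_inv_mul, div_div_cancel₀ ha.ne']
    exact Real.sqrt_sq hr.le
  right_inv x := by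
    have hx : 0 < (x : ℝ) + a' := add_pos_of_pos_of_nonneg x.2 ha'
    ext
    simp only [Real.sq_sqrt (div_pos ha hx).le, inv_div, div_mul_cancel₀ _ ha.ne',
      add_sub_cancel_right]
  continuous_toFun := by
    refine Continuous.subtype_mk ?_ _
    exact ((continuous_subtype_val.pow 2).inv₀ fun r => (pow_pos r.2.1 2).ne').mul
      continuous_const |>.sub continuous_const
  continuous_invFun := by
    refine Continuous.subtype_mk ?_ _
    exact (continuous_const.div (continuous_subtype_val.add continuous_const)
      fun x => (add_pos_of_pos_of_nonneg x.2 ha').ne').sqrt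

/-- In `SL₂(ℝ)`, parametrizing `T_{>0}` by `r > 0` via `t = diag(r, r⁻¹)`, the
set of `t ∈ T_{>0}` with `t·y(a)·t⁻¹·y(a')⁻¹` totally positive lower
unitriangular is homeomorphic to `ℝ_{>0}` via `t ↦ r⁻²·a − a'`. -/
theorem stmt14 (a a' : ℝ) (ha : 0 < a) (ha' : 0 < a') :
    ∃ h : {r : ℝ // 0 < r ∧ ∃ w : ℝ, 0 < w ∧
        !![r, 0; 0, r⁻¹] * !![1, 0; a, 1] * (!![r, 0; 0, r⁻¹])⁻¹
            * (!![(1:ℝ), 0; a', 1])⁻¹ = !![1, 0; w, 1]} ≃ₜ {x : ℝ // 0 < x},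
      ∀ p, (h p : ℝ) = ((p : ℝ) ^ 2)⁻¹ * a - a' := by
  have hmem : ∀ r : ℝ, (0 < r ∧ ∃ w : ℝ, 0 < w ∧
      !![r, 0; 0, r⁻¹] * !![1, 0; a, 1] * (!![r, 0; 0, r⁻¹])⁻¹
        * (!![(1:ℝ), 0; a', 1])⁻¹ = !![1, 0; w, 1]) ↔ (0 < r ∧ 0 < (r ^ 2)⁻¹ * a - a') :=
    fun r => and_congr_right fun hr => by
      simp only [diag_conj_lowerUnitriangular_mul_inv hr.ne', lowerUnitriangular_inj,
        exists_eq_right']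
  exact ⟨(Homeomorph.subtype (.refl ℝ) hmem).trans (homeomorphInvSqMulSub ha ha'.le),
    fun _ => rfl⟩
end

section
/- Let a,b,c,a',b',c' > 0 with ab − c > 0 and a'b' − c' > 0, and define τ(R,S) = ((Rc − a'b)S + a'b' − c', R(S(ab−c) − ab') + c'). For (A,B) ∈ ℝ_{>0}², exactly one of the two points of τ⁻¹(A,B) lies in the region {(R,S) : R > a'/a, S > b'/b}. -/
/-!
In the shifted coordinates `x = aR - a'`, `y = bS - b'` the equation `τ(R,S) = (A,B)` becomes
the pair `xy = A + B`, `a'(ab - c) y - cb' x = K` for a constant `K`, and the region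
`R > a'/a, S > b'/b` becomes the open positive quadrant. There the branch `y = (A + B)/x` of the
hyperbola is decreasing while the line has positive slope, so they meet exactly once; the
intersection point is the positive root of a quadratic.
-/

lemma exists_pos_sq_add_mul_eq {β K C : ℝ} (hβ : 0 < β) (hC : 0 < C) :
    ∃ x, 0 < x ∧ β * x ^ 2 + K * x = C := by
  set s := √(K ^ 2 + 4 * β * C)
  have hs : s ^ 2 = K ^ 2 + 4 * β * C := Real.sq_sqrt (by positivity)
  have hKs : K < s := by
    calc K ≤ |K| := le_abs_self K
      _ = √(K ^ 2) := (Real.sqrt_sq_eq_abs K).symm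
      _ < s := Real.sqrt_lt_sqrt (sq_nonneg K) (by nlinarith [mul_pos hβ hC])
  refine ⟨(-K + s) / (2 * β), div_pos (by linarith) (by positivity), ?_⟩
  field_simp
  linear_combination hs

lemma existsUnique_pos_of_mul_eq_of_sub_eq {α β Q : ℝ} (hα : 0 < α) (hβ : 0 < β) (hQ : 0 < Q)
    (K : ℝ) : ∃! p : ℝ × ℝ, (p.1 * p.2 = Q ∧ α * p.2 - β * p.1 = K) ∧ 0 < p.1 ∧ 0 < p.2 := by
  obtain ⟨x, hx, hxroot⟩ := exists_pos_sq_add_mul_eq (K := K) hβ (mul_pos hα hQ)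
  refine ⟨(x, Q / x), ⟨⟨by field_simp, ?_⟩, hx, div_pos hQ hx⟩, ?_⟩
  · field_simp
    linear_combination -hxroot
  · rintro ⟨x', y'⟩ ⟨⟨hxy', hline'⟩, hx', hy'⟩
    have hroot' : β * x' ^ 2 + K * x' = α * Q := by
      linear_combination α * hxy' - x' * hline'
    -- `β (x' + x) + K = β x + α y'`, whereas two distinct roots would sum to `-K / β`
    have hsum : 0 < β * (x' + x) + K := by nlinarith [mul_pos hα hy']
    have hxx : x' = x := by
      have : (x' - x) * (β * (x' + x) + K) = 0 := by linear_combination hroot' - hxroot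
      linarith [(mul_eq_zero.mp this).resolve_right hsum.ne']
    subst hxx
    simp only [Prod.mk.injEq, true_and]
    field_simp
    linarith

lemma tau_eq_iff {a b c a' b' c' A B : ℝ} (ha : a ≠ 0) (hb : b ≠ 0) (R S : ℝ) :
    ((R * c - a' * b) * S + a' * b' - c', R * (S * (a * b - c) - a * b') + c') = (A, B) ↔
      (a * R - a') * (b * S - b') = A + B ∧
        a' * (a * b - c) * (b * S - b') - c * b' * (a * R - a') =
          c * B - (a * b - c) * A + c * a' * b' - a * b * c' := by
  have hab : a * b ≠ 0 := mul_ne_zero ha hb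
  simp only [Prod.mk.injEq]
  constructor
  · rintro ⟨hA, hB⟩
    exact ⟨by linear_combination hA + hB, by linear_combination (c - a * b) * hA + c * hB⟩
  · rintro ⟨hprod, hline⟩
    exact ⟨mul_left_cancel₀ hab (by linear_combination c * hprod - hline),
      mul_left_cancel₀ hab (by linear_combination (a * b - c) * hprod + hline)⟩

theorem stmt17_general (a b c a' b' c' A B : ℝ)
    (ha : 0 < a) (hb : 0 < b) (hc : 0 < c) (habc : 0 < a * b - c)
    (ha' : 0 < a') (hb' : 0 < b')
    (hA : 0 < A) (hB : 0 < B) :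
    ∃! p : ℝ × ℝ,
      ((p.1 * c - a' * b) * p.2 + a' * b' - c',
        p.1 * (p.2 * (a * b - c) - a * b') + c') = (A, B) ∧
      a' / a < p.1 ∧ b' / b < p.2 := by
  let shift : ℝ × ℝ ≃ ℝ × ℝ :=
    ((Equiv.mulLeft₀ a ha.ne').trans (Equiv.subRight a')).prodCongr
      ((Equiv.mulLeft₀ b hb.ne').trans (Equiv.subRight b'))
  have hshifted := shift.existsUnique_congr_right.mpr <|
    existsUnique_pos_of_mul_eq_of_sub_eq (mul_pos ha' habc) (mul_pos hc hb') (add_pos hA hB)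
      (c * B - (a * b - c) * A + c * a' * b' - a * b * c')
  refine (existsUnique_congr fun p => ?_).mp hshifted
  rw [tau_eq_iff ha.ne' hb.ne', div_lt_iff₀' ha, div_lt_iff₀' hb, ← sub_pos (b := a'), ← sub_pos (b := b')]
  rfl

/-- Exactly one of the two points of `τ⁻¹(A,B)` lies in the region
`{(R,S) : R > a'/a, S > b'/b}`. -/
theorem stmt17 (a b c a' b' c' A B : ℝ)
    (ha : 0 < a) (hb : 0 < b) (hc : 0 < c) (habc : 0 < a * b - c)
    (ha' : 0 < a') (hb' : 0 < b') (hc' : 0 < c') (habc' : 0 < a' * b' - c')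
    (hA : 0 < A) (hB : 0 < B) :
    ∃! p : ℝ × ℝ,
      ((p.1 * c - a' * b) * p.2 + a' * b' - c',
        p.1 * (p.2 * (a * b - c) - a * b') + c') = (A, B) ∧
      a' / a < p.1 ∧ b' / b < p.2 :=
  stmt17_general a b c a' b' c' A B ha hb hc habc ha' hb' hA hB
end

section
/- Let g = [[g₁₁,g₁₂],[g₂₁,g₂₂]] ∈ SL₂(ℝ) with all entries positive. Then there is a unique u' = [[1,0],[w,1]] with w > 0 such that g stabilizes the Borel subgroup u'·B⁺·u'⁻¹, where B⁺ is the group of upper triangular matrices; explicitly, w = (g₂₂ − g₁₁ + √((g₁₁+g₂₂)² − 4))/(2·g₁₂). -/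
lemma eig_iff (g : Matrix (Fin 2) (Fin 2) ℝ) (w : ℝ) :
    (∃ lam : ℝ, g.mulVec ![1, w] = lam • ![1, w]) ↔
      g 0 1 * w ^ 2 + (g 0 0 - g 1 1) * w - g 1 0 = 0 := by
  constructor
  · rintro ⟨lam, h⟩
    have h0 := congrFun h 0
    have h1 := congrFun h 1
    simp [Matrix.mulVec, dotProduct, Fin.sum_univ_succ] at h0 h1
    linear_combination h0 * w - h1
  · intro h
    refine ⟨g 0 0 + g 0 1 * w, ?_⟩
    funext i
    fin_cases i <;> simp [Matrix.mulVec, dotProduct, Fin.sum_univ_succ] <;> nlinarith [h]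

/-- For totally positive `g ∈ SL₂(ℝ)` there is a unique `w > 0` such that `g`
stabilizes the line spanned by `(1, w)` (equivalently, `g` normalizes the
Borel subgroup `u'·B⁺·u'⁻¹` with `u' = [[1,0],[w,1]]`); explicitly
`w = (g₂₂ − g₁₁ + √((g₁₁+g₂₂)² − 4))/(2g₁₂)`. -/
theorem stmt19 (g : Matrix (Fin 2) (Fin 2) ℝ) (hdet : g.det = 1)
    (h11 : 0 < g 0 0) (h12 : 0 < g 0 1) (h21 : 0 < g 1 0) (h22 : 0 < g 1 1) :
    (∃! w : ℝ, 0 < w ∧ ∃ lam : ℝ, g.mulVec ![1, w] = lam • ![1, w]) ∧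
      (let w₀ : ℝ := (g 1 1 - g 0 0 + Real.sqrt ((g 0 0 + g 1 1) ^ 2 - 4))
          / (2 * g 0 1);
        0 < w₀ ∧ ∃ lam : ℝ, g.mulVec ![1, w₀] = lam • ![1, w₀]) := by
  have hdet' : g 0 0 * g 1 1 - g 0 1 * g 1 0 = 1 := by
    have := hdet; rw [Matrix.det_fin_two] at this; linarith
  set s := Real.sqrt ((g 0 0 + g 1 1) ^ 2 - 4) with hs
  have hD : (g 0 0 + g 1 1) ^ 2 - 4 = (g 0 0 - g 1 1) ^ 2 + 4 * (g 0 1 * g 1 0) := by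
    nlinarith [hdet']
  have hDpos : 0 < (g 0 0 + g 1 1) ^ 2 - 4 := by nlinarith [mul_pos h12 h21]
  have hs2 : s ^ 2 = (g 0 0 - g 1 1) ^ 2 + 4 * (g 0 1 * g 1 0) := by
    rw [hs, Real.sq_sqrt hDpos.le, hD]
  have hsnn : 0 ≤ s := Real.sqrt_nonneg _
  have hsgt : g 1 1 - g 0 0 < s := by nlinarith [mul_pos h12 h21]
  have hsgt2 : g 0 0 - g 1 1 < s := by nlinarith [mul_pos h12 h21]
  set w₀ : ℝ := (g 1 1 - g 0 0 + s) / (2 * g 0 1) with hw₀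
  have hw₀pos : 0 < w₀ := by
    apply div_pos (by linarith) (by linarith)
  have hquad : g 0 1 * w₀ ^ 2 + (g 0 0 - g 1 1) * w₀ - g 1 0 = 0 := by
    rw [hw₀]
    field_simp
    nlinarith [hs2]
  refine ⟨⟨w₀, ⟨hw₀pos, (eig_iff g w₀).2 hquad⟩, ?_⟩, hw₀pos, (eig_iff g w₀).2 hquad⟩
  rintro w ⟨hwpos, hl⟩
  have hq := (eig_iff g w).1 hl
  have : (w - w₀) * (g 0 1 * (w + w₀) + (g 0 0 - g 1 1)) = 0 := by nlinarith [hq, hquad]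
  rcases mul_eq_zero.1 this with h | h
  · linarith
  · exfalso; nlinarith [hq, mul_pos h12 (mul_pos hwpos hw₀pos)]
end
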